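/- arXiv:math/0601505 — 3 statements merged into one kernel-verified Lean document; each statement's English description precedes it below -/
import Mathlib

section
/- Let α ∈ (0,1/2), β ∈ (0,1/8), γ = 9/8, c₁ > 0, c₃ > 0, and j₀ ≥ 1. Suppose for each t ∈ [σ_{N-1}, σ_N) with N ∈ {1,...,j₀} one has X_t ≥ c₃ 2^{-j₀ + 7N/8} and ∑_{k=0}^{N} ξ_k ≤ c₁ + N α(1-α) γ log 2 where (1/2)α(1-α)∫_0^{σ_N} X_s^{2α-2} ds ≤ ∑_{k=0}^{N-1} ξ_k + constant adjustments as in the hypotheses, and X_0 ≤ 2^{-j₀+1}. Then there is a constant c₄ (depending only on α, β, γ, c₁, c₃) such that for all such t, X_0^{1-α} · exp((α(1-α))/(2(1-β)) · ∫_0^t X_s^{2α-2} ds) ≤ c₄ X_t^{1-α}. -/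
open MeasureTheory Set

set_option maxHeartbeats 1000000 in
/-- Deterministic core of inequality (3.10) in the chasing argument. -/
theorem stmt2 (α β γ c₁ c₃ : ℝ) (hα : α ∈ Set.Ioo (0:ℝ) (1/2))
    (hβ : β ∈ Set.Ioo (0:ℝ) (1/8)) (hγ : γ = 9/8) (hc₁ : 0 < c₁) (hc₃ : 0 < c₃) :
    ∃ c₄ : ℝ, 0 < c₄ ∧
      ∀ (j₀ : ℕ), 1 ≤ j₀ → ∀ (σ : ℕ → ℝ) (X : ℝ → ℝ),
        σ 0 = 0 → Monotone σ →
        (∀ t : ℝ, 0 < X t) →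
        X 0 ≤ (2:ℝ) ^ (-(j₀:ℝ) + 1) →
        -- lower bound for `X` on `[σ (N-1), σ N)`
        (∀ N : ℕ, 1 ≤ N → N ≤ j₀ → ∀ t : ℝ, σ (N - 1) ≤ t → t < σ N →
          c₃ * (2:ℝ) ^ (-(j₀:ℝ) + 7 * (N:ℝ) / 8) ≤ X t) →
        -- bound (3.6) on the occupation sums `∑_{k=0}^{N} ξ_k`
        (∀ N : ℕ, 1 ≤ N → N ≤ j₀ →
          (1/2) * α * (1 - α) * (∫ s in (0:ℝ)..(σ N), X s ^ (2 * α - 2))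
            ≤ c₁ + (N:ℝ) * α * (1 - α) * γ * Real.log 2) →
        Monotone (fun t : ℝ => ∫ s in (0:ℝ)..t, X s ^ (2 * α - 2)) →
        ∀ N : ℕ, 1 ≤ N → N ≤ j₀ → ∀ t : ℝ, σ (N - 1) ≤ t → t < σ N →
          X 0 ^ (1 - α) *
              Real.exp ((α * (1 - α)) / (2 * (1 - β)) *
                ∫ s in (0:ℝ)..t, X s ^ (2 * α - 2))
            ≤ c₄ * X t ^ (1 - α) := by
  obtain ⟨hα0, hα2⟩ := hα
  obtain ⟨hβ0, hβ8⟩ := hβ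
  have h1α : (0:ℝ) < 1 - α := by linarith
  have hβ1 : (0:ℝ) < 1 - β := by linarith
  refine ⟨Real.exp (c₁ / (1 - β)) * (2:ℝ) ^ (1 - α) / c₃ ^ (1 - α), ?_, ?_⟩
  · positivity
  intro j₀ hj₀ σ X hσ0 hσmono hXpos hX0 hlow hsum hImono N hN1 hNj t ht1 ht2
  have hNR : (1:ℝ) ≤ (N:ℝ) := by exact_mod_cast hN1
  set I : ℝ := ∫ s in (0:ℝ)..t, X s ^ (2 * α - 2) with hI
  set Iσ : ℝ := ∫ s in (0:ℝ)..(σ N), X s ^ (2 * α - 2) with hIσ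
  have hIle : I ≤ Iσ := hImono (le_of_lt ht2)
  have hS := hsum N hN1 hNj
  have hA := hlow N hN1 hNj t ht1 ht2
  -- bound the exponential argument
  have harg : (α * (1 - α)) / (2 * (1 - β)) * I
      ≤ c₁ / (1 - β) + ((N:ℝ) * α * (1 - α) * γ / (1 - β)) * Real.log 2 := by
    have h1 : (1/2) * α * (1 - α) * I ≤ c₁ + (N:ℝ) * α * (1 - α) * γ * Real.log 2 := by
      have : (1/2) * α * (1 - α) * I ≤ (1/2) * α * (1 - α) * Iσ := by
        have : (0:ℝ) < (1/2) * α * (1 - α) := by nlinarith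
        nlinarith
      linarith
    calc α * (1 - α) / (2 * (1 - β)) * I
        = (1/2 * α * (1 - α) * I) / (1 - β) := by field_simp
      _ ≤ (c₁ + (N:ℝ) * α * (1 - α) * γ * Real.log 2) / (1 - β) := by gcongr
      _ = c₁ / (1 - β) + ((N:ℝ) * α * (1 - α) * γ / (1 - β)) * Real.log 2 := by
          field_simp
  have hexp : Real.exp ((α * (1 - α)) / (2 * (1 - β)) * I)
      ≤ Real.exp (c₁ / (1 - β)) * (2:ℝ) ^ ((N:ℝ) * α * (1 - α) * γ / (1 - β)) := by
    have h2 : ((2:ℝ) : ℝ) ^ ((N:ℝ) * α * (1 - α) * γ / (1 - β))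
        = Real.exp (((N:ℝ) * α * (1 - α) * γ / (1 - β)) * Real.log 2) := by
      rw [Real.rpow_def_of_pos (by norm_num : (0:ℝ) < 2)]
      ring_nf
    rw [h2, ← Real.exp_add]
    exact Real.exp_le_exp.mpr harg
  -- bound X 0 ^ (1 - α)
  have hX0' : X 0 ^ (1 - α) ≤ (2:ℝ) ^ ((-(j₀:ℝ) + 1) * (1 - α)) := by
    have h := Real.rpow_le_rpow (hXpos 0).le hX0 h1α.le
    rwa [← Real.rpow_mul (by norm_num : (0:ℝ) ≤ 2)] at h
  -- lower bound for X t ^ (1 - α)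
  have hXt : c₃ ^ (1 - α) * (2:ℝ) ^ ((-(j₀:ℝ) + 7 * (N:ℝ) / 8) * (1 - α)) ≤ X t ^ (1 - α) := by
    have h := Real.rpow_le_rpow (by positivity) hA h1α.le
    rwa [Real.mul_rpow hc₃.le (by positivity),
      ← Real.rpow_mul (by norm_num : (0:ℝ) ≤ 2)] at h
  -- exponent comparison
  have key0 : α * γ ≤ 7/8 * (1 - β) := by rw [hγ]; nlinarith
  have key : (N:ℝ) * α * (1 - α) * γ / (1 - β) ≤ 7 * (N:ℝ) / 8 * (1 - α) := by
    rw [div_le_iff₀ hβ1]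
    nlinarith [mul_le_mul_of_nonneg_left key0
      (show (0:ℝ) ≤ (N:ℝ) * (1 - α) by positivity)]
  have key2 : (2:ℝ) ^ ((-(j₀:ℝ) + 1) * (1 - α)) *
        (2:ℝ) ^ ((N:ℝ) * α * (1 - α) * γ / (1 - β))
      ≤ (2:ℝ) ^ (1 - α) * (2:ℝ) ^ ((-(j₀:ℝ) + 7 * (N:ℝ) / 8) * (1 - α)) := by
    rw [← Real.rpow_add (by norm_num : (0:ℝ) < 2),
        ← Real.rpow_add (by norm_num : (0:ℝ) < 2)]
    apply Real.rpow_le_rpow_left_iff (by norm_num : (1:ℝ) < 2) |>.mpr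
    nlinarith [key]
  calc X 0 ^ (1 - α) * Real.exp ((α * (1 - α)) / (2 * (1 - β)) * I)
      ≤ (2:ℝ) ^ ((-(j₀:ℝ) + 1) * (1 - α)) *
        (Real.exp (c₁ / (1 - β)) * (2:ℝ) ^ ((N:ℝ) * α * (1 - α) * γ / (1 - β))) := by
        apply mul_le_mul hX0' hexp (Real.exp_pos _).le (by positivity)
    _ = Real.exp (c₁ / (1 - β)) * ((2:ℝ) ^ ((-(j₀:ℝ) + 1) * (1 - α)) *
        (2:ℝ) ^ ((N:ℝ) * α * (1 - α) * γ / (1 - β))) := by ring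
    _ ≤ Real.exp (c₁ / (1 - β)) * ((2:ℝ) ^ (1 - α) *
        (2:ℝ) ^ ((-(j₀:ℝ) + 7 * (N:ℝ) / 8) * (1 - α))) := by
        exact mul_le_mul_of_nonneg_left key2 (Real.exp_pos _).le
    _ = Real.exp (c₁ / (1 - β)) * (2:ℝ) ^ (1 - α) / c₃ ^ (1 - α) *
        (c₃ ^ (1 - α) * (2:ℝ) ^ ((-(j₀:ℝ) + 7 * (N:ℝ) / 8) * (1 - α))) := by
        have : (c₃:ℝ) ^ (1 - α) ≠ 0 := by positivity
        field_simp
    _ ≤ Real.exp (c₁ / (1 - β)) * (2:ℝ) ^ (1 - α) / c₃ ^ (1 - α) * X t ^ (1 - α) := by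
        exact mul_le_mul_of_nonneg_left hXt (by positivity)
end

section
/- Let α ∈ (0,1/2) and κ₀ ∈ (0,1), and set κ = min(β/(2c₄), 1/2) for constants β ∈ (0,1/8), c₄ ≥ 1, with κ₀ = 1 - (1-κ)^{1/(1-α)}. Suppose X, Y : [0,∞) → (0,∞) are continuous, R_t := X_t^{1-α} - Y_t^{1-α} satisfies R_t ≤ R_0 exp((α(1-α))/(2(1-β)) ∫_0^t X_s^{2α-2} ds) for t ≤ S where S := inf{t : Y_t^{1-α} ≤ (1-β)X_t^{1-α}}, that Y_0 > (1-κ₀)X_0 > 0, and that X_0^{1-α} exp((α(1-α))/(2(1-β)) ∫_0^t X_s^{2α-2} ds) ≤ c₄ X_t^{1-α} for all t. Then S = ∞; i.e., Y_t^{1-α} > (1-β) X_t^{1-α} for all t ≥ 0. -/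
open MeasureTheory Set

/-- Deterministic comparison argument from the proof of Lemma 3.2: the first time `S`
at which `Y^{1-α} ≤ (1-β) X^{1-α}` is infinite. -/
theorem stmt3 (α β c₄ κ κ₀ : ℝ) (hα : α ∈ Set.Ioo (0:ℝ) (1/2))
    (hβ : β ∈ Set.Ioo (0:ℝ) (1/8)) (hc₄ : 1 ≤ c₄)
    (hκ : κ = min (β / (2 * c₄)) (1/2))
    (hκ₀ : κ₀ = 1 - (1 - κ) ^ ((1:ℝ) / (1 - α)))
    (X Y : ℝ → ℝ) (hXc : Continuous X) (hYc : Continuous Y)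
    (hXpos : ∀ t : ℝ, 0 < X t) (hYpos : ∀ t : ℝ, 0 < Y t)
    (R : ℝ → ℝ) (hRdef : ∀ t, R t = X t ^ (1 - α) - Y t ^ (1 - α))
    -- `R_t ≤ R_0 exp(α(1-α)/(2(1-β)) ∫_0^t X^{2α-2})` for all `t ≤ S`,
    -- where `S = inf{t : Y_t^{1-α} ≤ (1-β) X_t^{1-α}}`
    (hR : ∀ t : ℝ, 0 ≤ t →
      (∀ s : ℝ, 0 ≤ s → s < t → (1 - β) * X s ^ (1 - α) < Y s ^ (1 - α)) →
      R t ≤ R 0 * Real.exp ((α * (1 - α)) / (2 * (1 - β)) *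
        ∫ s in (0:ℝ)..t, X s ^ (2 * α - 2)))
    (h0 : (1 - κ₀) * X 0 < Y 0) (hX0 : 0 < X 0)
    (hgrowth : ∀ t : ℝ, 0 ≤ t →
      X 0 ^ (1 - α) * Real.exp ((α * (1 - α)) / (2 * (1 - β)) *
          ∫ s in (0:ℝ)..t, X s ^ (2 * α - 2))
        ≤ c₄ * X t ^ (1 - α)) :
    ∀ t : ℝ, 0 ≤ t → (1 - β) * X t ^ (1 - α) < Y t ^ (1 - α) := by
  obtain ⟨hα0, hα1⟩ := hα
  obtain ⟨hβ0, hβ1⟩ := hβ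
  have hc₄0 : (0:ℝ) < c₄ := lt_of_lt_of_le one_pos hc₄
  have hκpos : 0 < κ := by rw [hκ]; exact lt_min (by positivity) (by norm_num)
  have hκle : κ ≤ β / (2 * c₄) := hκ ▸ min_le_left _ _
  have hκhalf : κ ≤ 1 / 2 := hκ ▸ min_le_right _ _
  have h1α : 0 < 1 - α := by linarith
  have hκ1 : (0:ℝ) < 1 - κ := by linarith
  have hκ₀eq : 1 - κ₀ = (1 - κ) ^ ((1:ℝ) / (1 - α)) := by rw [hκ₀]; ring
  have hκ₀nn : 0 ≤ 1 - κ₀ := by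
    rw [hκ₀eq]; exact Real.rpow_nonneg hκ1.le _
  have hpow : (1 - κ₀) ^ (1 - α) = 1 - κ := by
    rw [hκ₀eq, ← Real.rpow_mul hκ1.le, one_div, inv_mul_cancel₀ h1α.ne', Real.rpow_one]
  -- key step
  have key : ∀ t : ℝ, 0 ≤ t →
      (∀ s : ℝ, 0 ≤ s → s < t → (1 - β) * X s ^ (1 - α) < Y s ^ (1 - α)) →
      (1 - β) * X t ^ (1 - α) < Y t ^ (1 - α) := by
    intro t ht hs
    have hX0p : 0 < X 0 ^ (1 - α) := Real.rpow_pos_of_pos hX0 _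
    have hR0 : R 0 < (β / (2 * c₄)) * X 0 ^ (1 - α) := by
      have hY0 : (1 - κ) * X 0 ^ (1 - α) < Y 0 ^ (1 - α) := by
        have h1 : ((1 - κ₀) * X 0) ^ (1 - α) < Y 0 ^ (1 - α) :=
          Real.rpow_lt_rpow (by positivity) h0 h1α
        rwa [Real.mul_rpow hκ₀nn hX0.le, hpow] at h1
      rw [hRdef]
      nlinarith
    have hE := hR t ht hs
    have hE0 : (0:ℝ) < Real.exp ((α * (1 - α)) / (2 * (1 - β)) *
        ∫ s in (0:ℝ)..t, X s ^ (2 * α - 2)) := Real.exp_pos _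
    have h3 := hgrowth t ht
    have hXt : 0 < X t ^ (1 - α) := Real.rpow_pos_of_pos (hXpos t) _
    have h2 : R t ≤ (β / (2 * c₄)) * (c₄ * X t ^ (1 - α)) := by
      calc R t ≤ R 0 * Real.exp ((α * (1 - α)) / (2 * (1 - β)) *
            ∫ s in (0:ℝ)..t, X s ^ (2 * α - 2)) := hE
        _ ≤ (β / (2 * c₄)) * X 0 ^ (1 - α) * Real.exp ((α * (1 - α)) / (2 * (1 - β)) *
            ∫ s in (0:ℝ)..t, X s ^ (2 * α - 2)) := by
              exact mul_le_mul_of_nonneg_right hR0.le hE0.le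
        _ = (β / (2 * c₄)) * (X 0 ^ (1 - α) * Real.exp ((α * (1 - α)) / (2 * (1 - β)) *
            ∫ s in (0:ℝ)..t, X s ^ (2 * α - 2))) := by ring
        _ ≤ (β / (2 * c₄)) * (c₄ * X t ^ (1 - α)) := by
              exact mul_le_mul_of_nonneg_left h3 (by positivity)
    rw [hRdef] at h2
    have hsimp : (β / (2 * c₄)) * (c₄ * X t ^ (1 - α)) = (β / 2) * X t ^ (1 - α) := by
      field_simp
    rw [hsimp] at h2
    nlinarith
  -- continuity / first-time argument
  by_contra hcon
  push_neg at hcon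
  obtain ⟨t₁, ht₁0, ht₁⟩ := hcon
  set S : Set ℝ := {t | 0 ≤ t} ∩ {t | Y t ^ (1 - α) ≤ (1 - β) * X t ^ (1 - α)} with hS
  have cX : Continuous fun t => X t ^ (1 - α) :=
    hXc.rpow_const fun t => Or.inl (hXpos t).ne'
  have cY : Continuous fun t => Y t ^ (1 - α) :=
    hYc.rpow_const fun t => Or.inl (hYpos t).ne'
  have hSclosed : IsClosed S :=
    (isClosed_le continuous_const continuous_id).inter
      (isClosed_le cY (continuous_const.mul cX))
  have hSne : S.Nonempty := ⟨t₁, ht₁0, ht₁⟩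
  have hSbdd : BddBelow S := ⟨0, fun x hx => hx.1⟩
  have ht₀ : sInf S ∈ S := hSclosed.csInf_mem hSne hSbdd
  have hlt : ∀ s : ℝ, 0 ≤ s → s < sInf S → (1 - β) * X s ^ (1 - α) < Y s ^ (1 - α) := by
    intro s hs0 hs
    by_contra h
    push_neg at h
    exact absurd (csInf_le hSbdd ⟨hs0, h⟩) (not_le.mpr hs)
  have := key (sInf S) ht₀.1 hlt
  exact absurd ht₀.2 (not_le.mpr this)
end

section
/- Suppose weak uniqueness holds for the reflected SDE (1.4) among solutions spending zero time at 0, and X, Y, Z are solutions to (1.4) driven by the same Brownian motion with Z_t = X_t ∨ Y_t for all t. Then X_t = Y_t = Z_t for all t ≥ 0 almost surely. -/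
open MeasureTheory Set

/-- If `V ≤ W` pointwise, both measurable, and they have the same law, then `V = W` a.e. -/
lemma aux_ae_eq_of_le_of_map_eq {Ω : Type*} [MeasurableSpace Ω] (P : Measure Ω)
    [IsFiniteMeasure P] {V W : Ω → ℝ} (hV : Measurable V) (hW : Measurable W)
    (hle : ∀ ω, V ω ≤ W ω)
    (hlaw : Measure.map V P = Measure.map W P) : ∀ᵐ ω ∂P, V ω = W ω := by
  have hq : ∀ q : ℝ, P {ω | (q : ℝ) ≤ V ω} = P {ω | (q : ℝ) ≤ W ω} := by
    intro q
    rw [show {ω | (q : ℝ) ≤ V ω} = V ⁻¹' Ici q from rfl,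
      show {ω | (q : ℝ) ≤ W ω} = W ⁻¹' Ici q from rfl,
      ← Measure.map_apply hV measurableSet_Ici,
      ← Measure.map_apply hW measurableSet_Ici, hlaw]
  have key : ∀ q : ℚ, P {ω | V ω < (q : ℝ) ∧ (q : ℝ) ≤ W ω} = 0 := by
    intro q
    have hsub : {ω | (q : ℝ) ≤ V ω} ⊆ {ω | (q : ℝ) ≤ W ω} :=
      fun ω h => le_trans h (hle ω)
    have heq : {ω | V ω < (q : ℝ) ∧ (q : ℝ) ≤ W ω}
        = {ω | (q : ℝ) ≤ W ω} \ {ω | (q : ℝ) ≤ V ω} := by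
      ext ω; simp [and_comm, not_le]
    rw [heq, measure_diff hsub (hV measurableSet_Ici).nullMeasurableSet
      (measure_ne_top P _), hq q, tsub_self]
  have hsub : {ω | V ω ≠ W ω} ⊆ ⋃ q : ℚ, {ω | V ω < (q : ℝ) ∧ (q : ℝ) ≤ W ω} := by
    intro ω hω
    have hlt : V ω < W ω := lt_of_le_of_ne (hle ω) hω
    obtain ⟨q, hq1, hq2⟩ := exists_rat_btwn hlt
    exact mem_iUnion.2 ⟨q, hq1, le_of_lt hq2⟩
  have : P {ω | V ω ≠ W ω} = 0 :=
    measure_mono_null hsub (by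
      refine measure_iUnion_null fun q => key q)
  exact this

/-- Final step in the proof of Theorem 1.3: if `Z = X ∨ Y` has the same law (as a process)
as `X` and as `Y` — which follows from weak uniqueness for the reflected SDE — then
`X = Y = Z` for all times, almost surely. -/
theorem stmt16 {Ω : Type*} [MeasurableSpace Ω] (P : Measure Ω) [IsProbabilityMeasure P]
    (X Y Z : ℝ → Ω → ℝ)
    (hXc : ∀ ω, Continuous fun t => X t ω)
    (hYc : ∀ ω, Continuous fun t => Y t ω)
    (hXm : Measurable fun ω => (fun t => X t ω))
    (hYm : Measurable fun ω => (fun t => Y t ω))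
    (hZ : ∀ t ω, Z t ω = max (X t ω) (Y t ω))
    -- weak uniqueness: `Z`, `X` and `Y` all have the same law as processes
    (hlawX : Measure.map (fun ω => (fun t => Z t ω)) P
      = Measure.map (fun ω => (fun t => X t ω)) P)
    (hlawY : Measure.map (fun ω => (fun t => Z t ω)) P
      = Measure.map (fun ω => (fun t => Y t ω)) P) :
    ∀ᵐ ω ∂P, ∀ t : ℝ, X t ω = Y t ω ∧ X t ω = Z t ω := by
  -- pointwise measurability of coordinates
  have hXtm : ∀ t, Measurable fun ω => X t ω := fun t =>
    (measurable_pi_apply t).comp hXm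
  have hYtm : ∀ t, Measurable fun ω => Y t ω := fun t =>
    (measurable_pi_apply t).comp hYm
  have hZm : Measurable fun ω => (fun t => Z t ω) := by
    apply measurable_pi_lambda
    intro t
    have : (fun ω => Z t ω) = fun ω => max (X t ω) (Y t ω) := by
      funext ω; exact hZ t ω
    rw [this]
    exact (hXtm t).max (hYtm t)
  have hZtm : ∀ t, Measurable fun ω => Z t ω := fun t =>
    (measurable_pi_apply t).comp hZm
  -- fixed-time laws
  have hlawXt : ∀ t : ℝ, Measure.map (fun ω => Z t ω) P = Measure.map (fun ω => X t ω) P := by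
    intro t
    have h1 : (fun ω => Z t ω) = (fun f : ℝ → ℝ => f t) ∘ (fun ω => (fun s => Z s ω)) := rfl
    have h2 : (fun ω => X t ω) = (fun f : ℝ → ℝ => f t) ∘ (fun ω => (fun s => X s ω)) := rfl
    rw [h1, h2, ← Measure.map_map (measurable_pi_apply t) hZm,
      ← Measure.map_map (measurable_pi_apply t) hXm, hlawX]
  have hlawYt : ∀ t : ℝ, Measure.map (fun ω => Z t ω) P = Measure.map (fun ω => Y t ω) P := by
    intro t
    have h1 : (fun ω => Z t ω) = (fun f : ℝ → ℝ => f t) ∘ (fun ω => (fun s => Z s ω)) := rfl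
    have h2 : (fun ω => Y t ω) = (fun f : ℝ → ℝ => f t) ∘ (fun ω => (fun s => Y s ω)) := rfl
    rw [h1, h2, ← Measure.map_map (measurable_pi_apply t) hZm,
      ← Measure.map_map (measurable_pi_apply t) hYm, hlawY]
  -- for each t, a.e. X t = Z t and Y t = Z t
  have hXZ : ∀ t : ℝ, ∀ᵐ ω ∂P, X t ω = Z t ω := fun t =>
    aux_ae_eq_of_le_of_map_eq P (hXtm t) (hZtm t)
      (fun ω => (hZ t ω).symm ▸ le_max_left _ _) (hlawXt t).symm
  have hYZ : ∀ t : ℝ, ∀ᵐ ω ∂P, Y t ω = Z t ω := fun t =>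
    aux_ae_eq_of_le_of_map_eq P (hYtm t) (hZtm t)
      (fun ω => (hZ t ω).symm ▸ le_max_right _ _) (hlawYt t).symm
  -- over all rationals
  have hQ : ∀ᵐ ω ∂P, ∀ q : ℚ, X (q : ℝ) ω = Z (q : ℝ) ω ∧ Y (q : ℝ) ω = Z (q : ℝ) ω := by
    rw [MeasureTheory.ae_all_iff]
    intro q
    filter_upwards [hXZ (q : ℝ), hYZ (q : ℝ)] with ω h1 h2
    exact ⟨h1, h2⟩
  filter_upwards [hQ] with ω hω
  have hZc : Continuous fun t => Z t ω := by
    have : (fun t => Z t ω) = fun t => max (X t ω) (Y t ω) := by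
      funext t; exact hZ t ω
    rw [this]; exact (hXc ω).max (hYc ω)
  have hdense : Dense (Set.range ((↑) : ℚ → ℝ)) := Rat.denseRange_cast
  have hXeq : (fun t => X t ω) = (fun t => Z t ω) := by
    refine Continuous.ext_on hdense (hXc ω) hZc ?_
    rintro x ⟨q, rfl⟩
    exact (hω q).1
  have hYeq : (fun t => Y t ω) = (fun t => Z t ω) := by
    refine Continuous.ext_on hdense (hYc ω) hZc ?_
    rintro x ⟨q, rfl⟩
    exact (hω q).2
  intro t
  have h1 : X t ω = Z t ω := congrFun hXeq t
  have h2 : Y t ω = Z t ω := congrFun hYeq t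
  exact ⟨h1.trans h2.symm, h1⟩
end
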